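/- Define σ^GHZ_{a,b|x,y} := (1/8)[ I + ((−1)^b/√2)( Z + x (−1)^{a+y} X ) ] for a, b, x, y ∈ {0,1}. Then (i) σ^GHZ admits an LHS model (a finite set Λ, weights P_λ ≥ 0 summing to 1, density matrices ϱ_λ, and conditional distributions P(a,b|x,y,λ) with σ^GHZ_{a,b|x,y} = ∑_λ P_λ P(a,b|x,y,λ) ϱ_λ); yet (ii) the wired assemblage τ_{b|x} := ∑_a σ^GHZ_{a,b|x,a} produces, under Charlie's measurements M_{c|0} = (I + (−1)^c (2Z+X)/√5)/2 and M_{c|1} = (I + (−1)^c X)/2, a behavior P(b,c|x,z) = Tr[τ_{b|x} M_{c|z}] whose correlators E(x,z) = ∑_{b,c}(−1)^{b+c}P(b,c|x,z) satisfy E(0,0) − E(0,1) + E(1,0) + E(1,1) = (√5+1)/√2 > 2. Thus a tripartite assemblage admitting an LHS model is mapped by a bilocal wiring to a Bell-nonlocal bipartite assemblage (super-exposure of Bell nonlocality). -/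

import Mathlib

open Matrix BigOperators ComplexOrder

noncomputable section

/-- Pauli X matrix. -/
def X : Matrix (Fin 2) (Fin 2) ℂ := !![0, 1; 1, 0]

/-- Pauli Z matrix. -/
def Z : Matrix (Fin 2) (Fin 2) ℂ := !![1, 0; 0, -1]

/-- The GHZ assemblage σ^GHZ_{a,b|x,y}. -/
def σGHZ : Fin 2 → Fin 2 → Fin 2 → Fin 2 → Matrix (Fin 2) (Fin 2) ℂ := fun a b x y =>
  (1 / 8 : ℝ) • ((1 : Matrix (Fin 2) (Fin 2) ℂ) +
    ((-1 : ℝ) ^ (b : ℕ) / Real.sqrt 2) •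
      (Z + (((x : ℕ) : ℝ) * (-1 : ℝ) ^ ((a : ℕ) + (y : ℕ))) • X))

/-- A tripartite family `σ a b x y` of 2×2 complex matrices admits an LHS model. -/
def IsLHS3 (σ : Fin 2 → Fin 2 → Fin 2 → Fin 2 → Matrix (Fin 2) (Fin 2) ℂ) : Prop :=
  ∃ (n : ℕ) (P : Fin n → ℝ) (ϱ : Fin n → Matrix (Fin 2) (Fin 2) ℂ)
    (q : Fin 2 → Fin 2 → Fin 2 → Fin 2 → Fin n → ℝ),
    (∀ l, 0 ≤ P l) ∧ (∑ l, P l = 1) ∧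
    (∀ l, (ϱ l).PosSemidef) ∧ (∀ l, (ϱ l).trace = 1) ∧
    (∀ a b x y l, 0 ≤ q a b x y l) ∧
    (∀ x y l, ∑ a, ∑ b, q a b x y l = 1) ∧
    (∀ a b x y, σ a b x y = ∑ l, (P l * q a b x y l) • ϱ l)

/-- The wired bipartite assemblage τ_{b|x} = ∑_a σ^GHZ_{a,b|x,a}. -/
def τ : Fin 2 → Fin 2 → Matrix (Fin 2) (Fin 2) ℂ := fun b x =>
  ∑ a : Fin 2, σGHZ a b x a

/-- Charlie's measurement operators: the (2Z+X)/√5 basis for z = 0, the X basis for z = 1. -/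
def Mc : Fin 2 → Fin 2 → Matrix (Fin 2) (Fin 2) ℂ := fun c z =>
  if z = 0 then
    (1 / 2 : ℝ) • ((1 : Matrix (Fin 2) (Fin 2) ℂ) +
      ((-1 : ℝ) ^ (c : ℕ) / Real.sqrt 5) • ((2 : ℝ) • Z + X))
  else
    (1 / 2 : ℝ) • ((1 : Matrix (Fin 2) (Fin 2) ℂ) + ((-1 : ℝ) ^ (c : ℕ)) • X)

/-- The behavior obtained from the wired assemblage by Charlie's measurements. -/
def Pbeh (b c x z : Fin 2) : ℂ := (τ b x * Mc c z).trace

/-- The correlators of the behavior. -/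
def E (x z : Fin 2) : ℂ :=
  ∑ b : Fin 2, ∑ c : Fin 2, (-1 : ℂ) ^ ((b : ℕ) + (c : ℕ)) * Pbeh b c x z

/-!
All operators involved are real combinations `α • 1 + w • Z + u • X` (`qubitOp α w u`; `Y` never
occurs), and `Tr[(α + w Z + u X)(α' + w' Z + u' X)] = 2 (α α' + w w' + u u')`, so everything
reduces to arithmetic with Bloch vectors in the `(Z, X)`-plane.

LHS model: the hidden variable `(b, k)` is uniform and the hidden state is the pure state with
Bloch vector `(-1)^b (Z + (-1)^k X) / √2`. Bob outputs `b`; for `x = 0` Alice outputs a uniform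
`a`, and averaging over `k` removes the `X` component, as in `σ^GHZ_{a,b|0,y}`; for `x = 1` she
outputs the `a` with `k = a + y`.

Wiring: for `y = a` the sign `(-1)^(a+y)` is `1`, so `τ_{b|x} = (1 + (-1)^b (Z + x X) / √2) / 4`
and `E(x, z)` is the inner product of `(Z + x X) / √2` with Charlie's Bloch vectors
`(2 Z + X) / √5` and `X`. The CHSH combination is `(2 - 0 + 3) / √10 + 1 / √2 = (√5 + 1) / √2`.
-/

def qubitOp (α w u : ℝ) : Matrix (Fin 2) (Fin 2) ℂ := α • 1 + w • Z + u • X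

lemma qubitOp_eq_fin_two (α w u : ℝ) :
    qubitOp α w u = !![((α + w : ℝ) : ℂ), u; u, ((α - w : ℝ) : ℂ)] := by
  ext i j
  fin_cases i <;> fin_cases j <;> simp [qubitOp, X, Z, sub_eq_add_neg]

lemma qubitOp_add (α w u α' w' u' : ℝ) :
    qubitOp α w u + qubitOp α' w' u' = qubitOp (α + α') (w + w') (u + u') := by
  simp only [qubitOp, add_smul]
  abel

lemma smul_qubitOp (c α w u : ℝ) : c • qubitOp α w u = qubitOp (c * α) (c * w) (c * u) := by
  simp only [qubitOp, smul_add, smul_smul]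

lemma qubitOp_isHermitian (α w u : ℝ) : (qubitOp α w u).IsHermitian := by
  rw [qubitOp_eq_fin_two]
  ext i j
  fin_cases i <;> fin_cases j <;> simp

lemma qubitOp_mul_self (α w u : ℝ) :
    qubitOp α w u * qubitOp α w u = qubitOp (α ^ 2 + w ^ 2 + u ^ 2) (2 * α * w) (2 * α * u) := by
  simp only [qubitOp_eq_fin_two, mul_fin_two]
  ext i j
  fin_cases i <;> fin_cases j <;> simp <;> ring

lemma trace_qubitOp_mul (α w u α' w' u' : ℝ) :
    (qubitOp α w u * qubitOp α' w' u').trace = ((2 * (α * α' + w * w' + u * u') : ℝ) : ℂ) := by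
  simp only [qubitOp_eq_fin_two, mul_fin_two, trace_fin_two_of]
  push_cast
  ring

lemma trace_qubitOp (α w u : ℝ) : (qubitOp α w u).trace = ((2 * α : ℝ) : ℂ) := by
  simp only [qubitOp_eq_fin_two, trace_fin_two_of]
  push_cast
  ring

lemma qubitOp_posSemidef_of_pure {w u : ℝ} (h : w ^ 2 + u ^ 2 = 1 / 4) :
    (qubitOp (1 / 2) w u).PosSemidef := by
  have hidem : qubitOp (1 / 2) w u * qubitOp (1 / 2) w u = qubitOp (1 / 2) w u := by
    rw [qubitOp_mul_self]
    congr 1 <;> linarith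
  have hP : qubitOp (1 / 2) w u = (qubitOp (1 / 2) w u)ᴴ * qubitOp (1 / 2) w u := by
    rw [(qubitOp_isHermitian _ _ _).eq, hidem]
  exact hP ▸ posSemidef_conjTranspose_mul_self _

lemma neg_one_pow_val_add {R : Type*} [Ring R] (a y : Fin 2) :
    (-1 : R) ^ ((a + y : Fin 2) : ℕ) = (-1) ^ ((a : ℕ) + (y : ℕ)) := by
  rw [Fin.val_add, ← neg_one_pow_eq_pow_mod_two]

lemma σGHZ_eq_qubitOp (a b x y : Fin 2) :
    σGHZ a b x y = qubitOp (1 / 8) ((-1) ^ (b : ℕ) / (8 * √2))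
      ((-1) ^ (b : ℕ) * x * (-1) ^ ((a : ℕ) + (y : ℕ)) / (8 * √2)) := by
  simp only [σGHZ, qubitOp]
  module

lemma isLHS3_of_model {Λ : Type*} [Fintype Λ]
    (σ : Fin 2 → Fin 2 → Fin 2 → Fin 2 → Matrix (Fin 2) (Fin 2) ℂ)
    (P : Λ → ℝ) (ϱ : Λ → Matrix (Fin 2) (Fin 2) ℂ) (q : Fin 2 → Fin 2 → Fin 2 → Fin 2 → Λ → ℝ)
    (hP : ∀ l, 0 ≤ P l) (hP_sum : ∑ l, P l = 1)
    (hϱ : ∀ l, (ϱ l).PosSemidef) (hϱ_trace : ∀ l, (ϱ l).trace = 1)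
    (hq : ∀ a b x y l, 0 ≤ q a b x y l) (hq_sum : ∀ x y l, ∑ a, ∑ b, q a b x y l = 1)
    (hσ : ∀ a b x y, σ a b x y = ∑ l, (P l * q a b x y l) • ϱ l) :
    IsLHS3 σ := by
  let e := (Fintype.equivFin Λ).symm
  refine ⟨Fintype.card Λ, P ∘ e, ϱ ∘ e, fun a b x y => q a b x y ∘ e, fun l => hP _,
    (e.sum_comp P).trans hP_sum, fun l => hϱ _, fun l => hϱ_trace _, fun a b x y l => hq _ _ _ _ _,
    fun x y l => hq_sum _ _ _, fun a b x y => ?_⟩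
  rw [hσ]
  exact (e.sum_comp fun l => (P l * q a b x y l) • ϱ l).symm

def hiddenState (b k : Fin 2) : Matrix (Fin 2) (Fin 2) ℂ :=
  qubitOp (1 / 2) ((-1) ^ (b : ℕ) / (2 * √2)) ((-1) ^ (b : ℕ) * (-1) ^ (k : ℕ) / (2 * √2))

def response (a b x y : Fin 2) (l : Fin 2 × Fin 2) : ℝ :=
  if l.1 = b then (if x = 0 then 1 / 2 else if l.2 = a + y then 1 else 0) else 0

lemma hiddenState_posSemidef (b k : Fin 2) : (hiddenState b k).PosSemidef := by
  apply qubitOp_posSemidef_of_pure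
  have hsign : ∀ n : ℕ, ((-1 : ℝ) ^ n) ^ 2 = 1 := fun n => by
    rw [← pow_mul, mul_comm, pow_mul, neg_one_sq, one_pow]
  have h2 : √2 ^ 2 = 2 := Real.sq_sqrt (by norm_num)
  rw [div_pow, div_pow, mul_pow, mul_pow, hsign, hsign, h2]
  norm_num

lemma hiddenState_trace (b k : Fin 2) : (hiddenState b k).trace = 1 := by
  simp [hiddenState, trace_qubitOp]

lemma response_nonneg (a b x y : Fin 2) (l : Fin 2 × Fin 2) : 0 ≤ response a b x y l := by
  unfold response
  split_ifs <;> norm_num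

lemma sum_response (x y : Fin 2) (l : Fin 2 × Fin 2) : ∑ a, ∑ b, response a b x y l = 1 := by
  simp only [response, Finset.sum_ite_eq, Finset.mem_univ, if_true]
  split_ifs
  · norm_num
  · simp [← sub_eq_iff_eq_add]

lemma σGHZ_eq_sum_response (a b x y : Fin 2) :
    σGHZ a b x y = ∑ l, ((1 / 4 : ℝ) * response a b x y l) • hiddenState l.1 l.2 := by
  simp only [Fintype.sum_prod_type_right, response, mul_ite, mul_zero, ite_smul, zero_smul,
    Finset.sum_ite_eq', Finset.mem_univ, if_true]
  rw [σGHZ_eq_qubitOp]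
  by_cases hx : x = 0
  · simp only [hx, if_true, Fin.sum_univ_two, hiddenState, smul_qubitOp, qubitOp_add]
    congr 1 <;> norm_num <;> ring
  · obtain rfl := Fin.eq_one_of_ne_zero x hx
    simp only [hx, if_false, Finset.sum_ite_eq', Finset.mem_univ, if_true, hiddenState,
      smul_qubitOp, neg_one_pow_val_add]
    congr 1 <;> norm_num <;> ring

lemma τ_eq_qubitOp (b x : Fin 2) :
    τ b x = qubitOp (1 / 4) ((-1) ^ (b : ℕ) * (1 / (4 * √2))) ((-1) ^ (b : ℕ) * (x / (4 * √2))) := by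
  simp only [τ, σGHZ_eq_qubitOp, Fin.sum_univ_two, qubitOp_add]
  congr 1 <;> norm_num <;> ring

lemma Mc_eq_qubitOp (c z : Fin 2) :
    Mc c z = qubitOp (1 / 2) ((-1) ^ (c : ℕ) * ![1 / √5, 0] z)
      ((-1) ^ (c : ℕ) * ![1 / (2 * √5), 1 / 2] z) := by
  fin_cases z <;> simp only [Mc, qubitOp] <;> norm_num <;> module

lemma correlator_eq_of_qubitOp {A B : Fin 2 → Matrix (Fin 2) (Fin 2) ℂ} {α w u α' w' u' : ℝ}
    (hA : ∀ b, A b = qubitOp α ((-1) ^ (b : ℕ) * w) ((-1) ^ (b : ℕ) * u))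
    (hB : ∀ c, B c = qubitOp α' ((-1) ^ (c : ℕ) * w') ((-1) ^ (c : ℕ) * u')) :
    ∑ b : Fin 2, ∑ c : Fin 2, (-1 : ℂ) ^ ((b : ℕ) + (c : ℕ)) * (A b * B c).trace =
      ((8 * (w * w' + u * u') : ℝ) : ℂ) := by
  simp only [hA, hB, trace_qubitOp_mul, Fin.sum_univ_two, Fin.val_zero, Fin.val_one]
  push_cast
  ring

lemma E_eq (x z : Fin 2) :
    E x z = ((8 * (1 / (4 * √2) * ![1 / √5, 0] z + x / (4 * √2) * ![1 / (2 * √5), 1 / 2] z) : ℝ)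
      : ℂ) :=
  correlator_eq_of_qubitOp (τ_eq_qubitOp · x) (Mc_eq_qubitOp · z)

lemma chsh_value : E 0 0 - E 0 1 + E 1 0 + E 1 1 = (((√5 + 1) / √2 : ℝ) : ℂ) := by
  simp only [E_eq]
  norm_cast
  have h5 : √5 ^ 2 = 5 := Real.sq_sqrt (by norm_num)
  have h5' : √5 ≠ 0 := by positivity
  have h2' : √2 ≠ 0 := by positivity
  norm_num
  field_simp
  linear_combination (-8) * h5

lemma two_lt_chsh_value : (2 : ℝ) < (√5 + 1) / √2 := by
  have h2 : √2 * √2 = 2 := Real.mul_self_sqrt (by norm_num)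
  have h5 : √5 * √5 = 5 := Real.mul_self_sqrt (by norm_num)
  rw [lt_div_iff₀ (by positivity)]
  nlinarith [Real.sqrt_nonneg 5, Real.sqrt_nonneg 2, sq_nonneg (√5 - 2), sq_nonneg (√2 - 1)]

lemma isLHS3_σGHZ : IsLHS3 σGHZ :=
  isLHS3_of_model σGHZ (fun _ => 1 / 4) (fun l : Fin 2 × Fin 2 => hiddenState l.1 l.2) response
    (fun _ => by norm_num) (by norm_num) (fun _ => hiddenState_posSemidef _ _)
    (fun _ => hiddenState_trace _ _) response_nonneg sum_response σGHZ_eq_sum_response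

/-- Super-exposure of Bell nonlocality: the GHZ assemblage admits an LHS model, yet the
bilocal wiring y = a maps it to a bipartite assemblage whose behavior under Charlie's
measurements violates the CHSH inequality. -/
theorem super_exposure_of_bell_nonlocality :
    IsLHS3 σGHZ ∧
    E 0 0 - E 0 1 + E 1 0 + E 1 1 = (((Real.sqrt 5 + 1) / Real.sqrt 2 : ℝ) : ℂ) ∧
    (2 : ℝ) < (Real.sqrt 5 + 1) / Real.sqrt 2 :=
  ⟨isLHS3_σGHZ, chsh_value, two_lt_chsh_value⟩
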